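/- arXiv:2012.01090 — 2 statements merged into one kernel-verified Lean document; each statement's English description precedes it below -/
import Mathlib

section
/- Let G be a connected graph with at least two vertices, let v ∈ V(G), and let 1 ≤ k ≤ l be integers. Then ε(G_{k−1,l+1}) > ε(G_{k,l}). -/
open SimpleGraph

/-- The eccentricity of a vertex: maximum distance to any vertex. -/
noncomputable def ecc {V : Type*} (G : SimpleGraph V) (v : V) : ℕ :=
  ⨆ u, G.dist v u

/-- The total eccentricity index: sum of eccentricities of all vertices. -/
noncomputable def totalEcc {V : Type*} [Fintype V] (G : SimpleGraph V) : ℕ :=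
  ∑ v, ecc G v

/-- A pendant vertex: a vertex of degree one, i.e. with exactly one neighbour. -/
def IsPendant {V : Type*} (G : SimpleGraph V) (v : V) : Prop :=
  ∃! u, G.Adj v u

/-- A cut vertex: a vertex whose removal disconnects the graph. -/
def IsCutVertex {V : Type*} (G : SimpleGraph V) (w : V) : Prop :=
  ¬ (G.induce {v | v ≠ w}).Connected

/-- distance between two subgraphs -/
noncomputable def subgraphDist {V : Type*} (G : SimpleGraph V) (B B' : G.Subgraph) : ℕ :=
  sInf {d | ∃ u ∈ B.verts, ∃ w ∈ B'.verts, G.dist u w = d}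

/-- A 2-connected subgraph: at least two vertices, connected, and no cut vertex. -/
def TwoConn {V : Type*} {G : SimpleGraph V} (H : G.Subgraph) : Prop :=
  2 ≤ H.verts.ncard ∧ H.coe.Connected ∧ ∀ w, ¬ IsCutVertex H.coe w

/-- A block: a maximal 2-connected subgraph. -/
def IsBlock {V : Type*} {G : SimpleGraph V} (H : G.Subgraph) : Prop :=
  TwoConn H ∧ ∀ H' : G.Subgraph, H ≤ H' → TwoConn H' → H' = H

/-- A pendant block: a block containing exactly one cut vertex of `G`. -/
def IsPendantBlock {V : Type*} (G : SimpleGraph V) (H : G.Subgraph) : Prop :=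
  ∃! w, w ∈ H.verts ∧ IsCutVertex G w

/-- `G_{k,l}`: the graph obtained from `G` by attaching two new paths,
with `k` resp. `l` new vertices, at the vertex `v`. -/
def attachTwoPaths {V : Type*} (G : SimpleGraph V) (v : V) (k l : ℕ) :
    SimpleGraph (V ⊕ (Fin k ⊕ Fin l)) :=
  SimpleGraph.fromRel (fun p q =>
    match p, q with
    | .inl x, .inl y => G.Adj x y
    | .inl x, .inr (.inl i) => x = v ∧ i.val = 0
    | .inl x, .inr (.inr i) => x = v ∧ i.val = 0
    | .inr (.inl i), .inr (.inl j) => i.val + 1 = j.val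
    | .inr (.inr i), .inr (.inr j) => i.val + 1 = j.val
    | _, _ => False)

/-- The graph obtained from `H1`, `H2` and the path `P_d = v_1 v_2 … v_d` by identifying
`u ∈ V(H1)`, `v ∈ V(H2)` and `v_1` into a single vertex.  The `Fin (d-1)` part records the
path vertices `v_2, …, v_d`. -/
def glueMid {V1 V2 : Type*} (H1 : SimpleGraph V1) (H2 : SimpleGraph V2)
    (u : V1) (v : V2) (d : ℕ) :
    SimpleGraph (V1 ⊕ ({x : V2 // x ≠ v} ⊕ Fin (d - 1))) :=
  SimpleGraph.fromRel (fun p q =>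
    match p, q with
    | .inl x, .inl y => H1.Adj x y
    | .inl x, .inr (.inl y) => x = u ∧ H2.Adj v y.1
    | .inl x, .inr (.inr i) => x = u ∧ i.val = 0
    | .inr (.inl x), .inr (.inl y) => H2.Adj x.1 y.1
    | .inr (.inr i), .inr (.inr j) => i.val + 1 = j.val
    | _, _ => False)

/-- The graph obtained from `H1`, `H2` and the path `P_d = v_1 v_2 … v_d` by identifying
`u ∈ V(H1)` with `v_1` and `v ∈ V(H2)` with `v_d`.  The `Fin (d-1)` part records the path
vertices `v_2, …, v_d` (the last one being identified with `v`). -/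
def glueEnds {V1 V2 : Type*} (H1 : SimpleGraph V1) (H2 : SimpleGraph V2)
    (u : V1) (v : V2) (d : ℕ) :
    SimpleGraph (V1 ⊕ ({x : V2 // x ≠ v} ⊕ Fin (d - 1))) :=
  SimpleGraph.fromRel (fun p q =>
    match p, q with
    | .inl x, .inl y => H1.Adj x y
    | .inl x, .inr (.inr i) => x = u ∧ i.val = 0
    | .inr (.inl x), .inr (.inl y) => H2.Adj x.1 y.1
    | .inr (.inr i), .inr (.inl y) => i.val + 1 = d - 1 ∧ H2.Adj v y.1
    | .inr (.inr i), .inr (.inr j) => i.val + 1 = j.val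
    | _, _ => False)

/-- `U_{n,g}^l`: the unicyclic graph on `n` vertices obtained by joining one end vertex of
the path `P_{n-g}` to a vertex of the cycle `C_g` by an edge. -/
def UnlGraph (n g : ℕ) : SimpleGraph (Fin (n - g) ⊕ Fin g) :=
  SimpleGraph.fromRel (fun p q =>
    match p, q with
    | .inl i, .inl j => i.val + 1 = j.val
    | .inl i, .inr j => i.val + 1 = n - g ∧ j.val = 0
    | .inr i, .inr j => i.val + 1 = j.val ∨ (i.val = 0 ∧ j.val + 1 = g)
    | _, _ => False)

/-- `U_{n,g}^p`: the unicyclic graph on `n` vertices obtained by attaching `n - g` pendant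
vertices to one vertex of the cycle `C_g`. -/
def UnpGraph (n g : ℕ) : SimpleGraph (Fin g ⊕ Fin (n - g)) :=
  SimpleGraph.fromRel (fun p q =>
    match p, q with
    | .inl i, .inl j => i.val + 1 = j.val ∨ (i.val = 0 ∧ j.val + 1 = g)
    | .inl i, .inr _ => i.val = 0
    | _, _ => False)

/-- The graph obtained by joining the vertex `u` of `H` to the pendant vertex of
`U_{r,g}^l` by an edge. -/
def joinPendant {V : Type*} (H : SimpleGraph V) (u : V) (r g : ℕ) :
    SimpleGraph (V ⊕ (Fin (r - g) ⊕ Fin g)) :=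
  SimpleGraph.fromRel (fun p q =>
    match p, q with
    | .inl x, .inl y => H.Adj x y
    | .inl x, .inr (.inl i) => x = u ∧ i.val = 0
    | .inr a, .inr b => (UnlGraph r g).Adj a b
    | _, _ => False)

/-- `C_{m1,m2}^n` in the case `n = m1 + m2 - 1`: two cycles `C_{m1}` and `C_{m2}`
sharing exactly one vertex (the vertex `0`). -/
def twoCyclesGlued (m1 m2 : ℕ) : SimpleGraph (Fin (m1 + m2 - 1)) :=
  SimpleGraph.fromRel (fun i j =>
    (i.val + 1 = j.val ∧ j.val < m1) ∨ (i.val = 0 ∧ j.val + 1 = m1)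
    ∨ (i.val = 0 ∧ j.val = m1) ∨ (m1 ≤ i.val ∧ i.val + 1 = j.val)
    ∨ (i.val = 0 ∧ j.val + 2 = m1 + m2))

/-- `C_{3,3}^n` for `n > 5`: two triangles `{0,1,2}` and `{n-3,n-2,n-1}` joined by the path
`2, 3, …, n-3` (a path on `n - 4` vertices whose ends are identified with a vertex of each
triangle). -/
def C33 (n : ℕ) : SimpleGraph (Fin n) :=
  SimpleGraph.fromRel (fun i j =>
    (i.val = 0 ∧ j.val = 1) ∨ (i.val = 0 ∧ j.val = 2) ∨ (i.val = 1 ∧ j.val = 2)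
    ∨ (2 ≤ i.val ∧ i.val + 1 = j.val ∧ j.val + 3 ≤ n)
    ∨ (i.val + 3 = n ∧ j.val + 2 = n) ∨ (i.val + 2 = n ∧ j.val + 1 = n)
    ∨ (i.val + 3 = n ∧ j.val + 1 = n))

/-- `T(l, m, d)`: the tree obtained from the path `P_d` by attaching `l` pendant vertices at
one end and `m` pendant vertices at the other end. -/
def Tlmd (l m d : ℕ) : SimpleGraph (Fin d ⊕ (Fin l ⊕ Fin m)) :=
  SimpleGraph.fromRel (fun p q =>
    match p, q with
    | .inl i, .inl j => i.val + 1 = j.val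
    | .inl i, .inr (.inl _) => i.val = 0
    | .inl i, .inr (.inr _) => i.val + 1 = d
    | _, _ => False)

/-- `K_m^n(l_1, …, l_m)`: the graph obtained from the complete graph `K_m` by identifying,
for each `i`, one end vertex of a path on `l i` vertices with the `i`-th vertex of `K_m`.
The vertex `⟨i, 0⟩` is the `i`-th vertex of the complete graph. -/
def Kmn (m : ℕ) (l : Fin m → ℕ) : SimpleGraph ((i : Fin m) × Fin (l i)) :=
  SimpleGraph.fromRel (fun p q =>
    (p.1 = q.1 ∧ p.2.val + 1 = q.2.val) ∨ (p.1 ≠ q.1 ∧ p.2.val = 0 ∧ q.2.val = 0))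

/-- The graph obtained from `H`, `C_{m1}` and `C_{m2}` by identifying the vertex `w` of `H`,
a vertex of `C_{m1}` and a vertex of `C_{m2}` into one vertex. -/
def glueTwoCycles {V : Type*} (H : SimpleGraph V) (w : V) (m1 m2 : ℕ) :
    SimpleGraph (V ⊕ (Fin (m1 - 1) ⊕ Fin (m2 - 1))) :=
  SimpleGraph.fromRel (fun p q =>
    match p, q with
    | .inl x, .inl y => H.Adj x y
    | .inl x, .inr (.inl i) => x = w ∧ (i.val = 0 ∨ i.val + 2 = m1)
    | .inl x, .inr (.inr i) => x = w ∧ (i.val = 0 ∨ i.val + 2 = m2)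
    | .inr (.inl i), .inr (.inl j) => i.val + 1 = j.val
    | .inr (.inr i), .inr (.inr j) => i.val + 1 = j.val
    | _, _ => False)

/-- The graph obtained from `H` and the cycle `C_M` by identifying the vertex `w` of `H`
with one vertex of the cycle. -/
def glueOneCycle {V : Type*} (H : SimpleGraph V) (w : V) (M : ℕ) :
    SimpleGraph (V ⊕ Fin (M - 1)) :=
  SimpleGraph.fromRel (fun p q =>
    match p, q with
    | .inl x, .inl y => H.Adj x y
    | .inl x, .inr i => x = w ∧ (i.val = 0 ∨ i.val + 2 = M)
    | .inr i, .inr j => i.val + 1 = j.val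
    | _, _ => False)

/-!
Distances in `G_{a,b}` are explicit, so eccentricities have closed forms: with `E = e_G(v)`,
a vertex `x` of `G` has eccentricity `max (e_G(x)) (d(x,v) + max a b)`, and the vertex at
distance `j` from `v` on the path with `b` new vertices has eccentricity
`max (j + max E a) (b - j)`. Now move the end vertex of the shorter path (with `k` new vertices)
to the end of the longer one. The vertices of `G` never lose. If `E ≥ k`, no path vertex loses
either and the moved vertex strictly gains. If `E < k`, the path vertices lose exactly `1` in
total, but each of the at least two vertices of `G` gains `1`.
-/

namespace SimpleGraph

variable {V W : Type*} {G : SimpleGraph V} {H : SimpleGraph W}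

theorem Reachable.dist_map_le {x y : V} (h : G.Reachable x y) (f : G →g H) :
    H.dist (f x) (f y) ≤ G.dist x y := by
  obtain ⟨w, hw⟩ := h.exists_walk_length_eq_dist
  simpa [hw] using dist_le (w.map f)

theorem Iso.dist_eq (e : G ≃g H) (x y : V) : H.dist (e x) (e y) = G.dist x y := by
  by_cases h : G.Reachable x y
  · refine le_antisymm (h.dist_map_le e.toHom) ?_
    simpa using (h.map e.toHom).dist_map_le e.symm.toHom
  · have h' : ¬ H.Reachable (e x) (e y) := fun h' => h (by simpa using h'.map e.symm.toHom)
    rw [dist_eq_zero_of_not_reachable h, dist_eq_zero_of_not_reachable h']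

theorem Reachable.abs_sub_le_dist {f : V → ℤ} (hf : ∀ x y, G.Adj x y → |f x - f y| ≤ 1)
    {x y : V} (h : G.Reachable x y) : |f x - f y| ≤ G.dist x y := by
  obtain ⟨w, hw⟩ := h.exists_walk_length_eq_dist
  rw [← hw]
  clear hw h
  induction w with
  | nil => simp
  | @cons x z y hxz w ih =>
    calc |f x - f y| ≤ |f x - f z| + |f z - f y| := abs_sub_le _ _ _
      _ ≤ 1 + w.length := add_le_add (hf _ _ hxz) ih
      _ = (w.cons hxz).length := by rw [Walk.length_cons]; push_cast; ring

end SimpleGraph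

open SimpleGraph

section Eccentricity

variable {V W : Type*} {G : SimpleGraph V} {H : SimpleGraph W}

theorem dist_le_ecc [Finite V] (x y : V) : G.dist x y ≤ ecc G x :=
  le_ciSup (Set.finite_range _).bddAbove y

theorem ecc_le {x : V} {m : ℕ} (h : ∀ y, G.dist x y ≤ m) : ecc G x ≤ m :=
  ciSup_le' h

theorem exists_dist_eq_ecc [Finite V] (x : V) : ∃ y, G.dist x y = ecc G x :=
  haveI : Nonempty V := ⟨x⟩
  exists_eq_ciSup_of_finite

theorem SimpleGraph.Connected.ecc_le_dist_add_ecc [Finite V] (hG : G.Connected) (x v : V) :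
    ecc G x ≤ G.dist x v + ecc G v :=
  ecc_le fun y => hG.dist_triangle.trans (Nat.add_le_add_left (dist_le_ecc v y) _)

theorem SimpleGraph.Iso.ecc_eq (e : G ≃g H) (x : V) : ecc H (e x) = ecc G x := by
  simp only [ecc, ← e.dist_eq x]
  exact (e.toEquiv.iSup_comp (g := fun u => H.dist (e x) u)).symm

end Eccentricity

namespace attachTwoPaths

variable {V : Type*} (G : SimpleGraph V) (v : V) (a b : ℕ)

def firstPath : Fin (a + 1) → V ⊕ (Fin a ⊕ Fin b) :=
  Fin.cases (.inl v) fun i => .inr (.inl i)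

def secondPath : Fin (b + 1) → V ⊕ (Fin a ⊕ Fin b) :=
  Fin.cases (.inl v) fun j => .inr (.inr j)

@[simp] theorem firstPath_zero : firstPath v a b 0 = .inl v := rfl
@[simp] theorem firstPath_succ (i : Fin a) : firstPath v a b i.succ = .inr (.inl i) := rfl
@[simp] theorem secondPath_zero : secondPath v a b 0 = .inl v := rfl
@[simp] theorem secondPath_succ (j : Fin b) : secondPath v a b j.succ = .inr (.inr j) := rfl

def swap : attachTwoPaths G v a b ≃g attachTwoPaths G v b a where
  toEquiv := Equiv.sumCongr (Equiv.refl V) (Equiv.sumComm _ _)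
  map_rel_iff' := by rintro (x | i | j) (y | i' | j') <;> simp [attachTwoPaths]

@[simp] theorem swap_inl (x : V) : swap G v a b (.inl x) = .inl x := rfl

@[simp] theorem swap_inr_inr (j : Fin b) : swap G v a b (.inr (.inr j)) = .inr (.inl j) := rfl

@[simp] theorem swap_secondPath (j : Fin (b + 1)) :
    swap G v a b (secondPath v a b j) = firstPath v b a j := by
  cases j using Fin.cases <;> rfl

theorem adj_secondPath {i j : Fin (b + 1)} (h : i.val + 1 = j.val) :
    (attachTwoPaths G v a b).Adj (secondPath v a b i) (secondPath v a b j) := by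
  obtain ⟨j, rfl⟩ := Fin.exists_succ_eq.mpr (Fin.ne_of_val_ne (by omega : j.val ≠ 0))
  cases i using Fin.cases <;> simp_all [attachTwoPaths, Fin.ext_iff]; omega

theorem reachable_secondPath (j : Fin (b + 1)) :
    (attachTwoPaths G v a b).Reachable (.inl v) (secondPath v a b j) := by
  induction j using Fin.induction with
  | zero => rfl
  | succ j ih => exact ih.trans (adj_secondPath G v a b (by simp)).reachable

def inlHom : G →g attachTwoPaths G v a b where
  toFun := .inl
  map_rel' h := by simp [attachTwoPaths, h, h.ne]

theorem connected (hG : G.Connected) : (attachTwoPaths G v a b).Connected := by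
  have hv : ∀ p, (attachTwoPaths G v a b).Reachable (.inl v) p := by
    rintro (x | i | j)
    · exact (hG v x).map (inlHom G v a b)
    · simpa using (reachable_secondPath G v b a i.succ).map (swap G v b a).toHom
    · exact reachable_secondPath G v a b j.succ
  exact (connected_iff _).mpr ⟨fun p q => (hv p).symm.trans (hv q), ⟨.inl v⟩⟩

/-- All lower bounds on distances in `G_{a,b}` are read off from this `1`-Lipschitz function. -/
noncomputable def potential (x : V) : V ⊕ (Fin a ⊕ Fin b) → ℤ
  | .inl y => G.dist x y
  | .inr (.inl i) => G.dist x v - (i + 1)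
  | .inr (.inr j) => G.dist x v + (j + 1)

theorem abs_potential_sub_le (x : V) (p q : V ⊕ (Fin a ⊕ Fin b))
    (h : (attachTwoPaths G v a b).Adj p q) :
    |potential G v a b x p - potential G v a b x q| ≤ 1 := by
  rw [abs_le]
  rcases p with y | i | j <;> rcases q with y' | i' | j' <;>
    simp only [attachTwoPaths, fromRel_adj, ne_eq, Sum.inl.injEq, Sum.inr.injEq, reduceCtorEq,
      not_false_eq_true, or_false, false_or, or_self, true_and, and_false, potential] at h ⊢
  case inl.inl =>
    obtain ⟨-, hadj | hadj⟩ := h <;> have := hadj.diff_dist_adj (u := x) <;> omega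
  all_goals
    try obtain ⟨rfl, h0⟩ := h
    omega

@[simp] theorem potential_inl (x y : V) : potential G v a b x (.inl y) = G.dist x y := rfl

@[simp] theorem potential_firstPath (x : V) (i : Fin (a + 1)) :
    potential G v a b x (firstPath v a b i) = G.dist x v - i := by
  cases i using Fin.cases <;> simp [potential]

@[simp] theorem potential_secondPath (x : V) (j : Fin (b + 1)) :
    potential G v a b x (secondPath v a b j) = G.dist x v + j := by
  cases j using Fin.cases <;> simp [potential]

variable {G}

theorem potential_sub_le_dist (hG : G.Connected) (x : V) (p q : V ⊕ (Fin a ⊕ Fin b)) :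
    potential G v a b x q - potential G v a b x p ≤ (attachTwoPaths G v a b).dist p q :=
  (le_abs_self _).trans <| (abs_sub_comm _ _).trans_le <|
    ((connected G v a b hG).preconnected p q).abs_sub_le_dist (abs_potential_sub_le G v a b x)

theorem dist_inl_inl (hG : G.Connected) (x y : V) :
    (attachTwoPaths G v a b).dist (.inl x) (.inl y) = G.dist x y := by
  refine le_antisymm ((hG x y).dist_map_le (inlHom G v a b)) ?_
  simpa using potential_sub_le_dist v a b hG x (.inl x) (.inl y)

theorem dist_secondPath_secondPath (hG : G.Connected) {i j : Fin (b + 1)} (hij : i ≤ j) :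
    (attachTwoPaths G v a b).dist (secondPath v a b i) (secondPath v a b j) = (j : ℕ) - i := by
  refine le_antisymm ?_ ?_
  · induction j using Fin.induction generalizing i with
    | zero => simp [Fin.le_zero_iff.mp hij]
    | succ j ih =>
      rcases eq_or_ne i j.succ with rfl | hne
      · simp
      have hi : i ≤ j.castSucc := Fin.le_castSucc_iff.mpr (lt_of_le_of_ne hij hne)
      calc _ ≤ (attachTwoPaths G v a b).dist (secondPath v a b i) (secondPath v a b j.castSucc)
            + (attachTwoPaths G v a b).dist (secondPath v a b j.castSucc)
                (secondPath v a b j.succ) :=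
            (connected G v a b hG).dist_triangle
        _ ≤ ((j : ℕ) - i) + 1 := by
            gcongr
            · exact ih hi
            · exact (dist_eq_one_iff_adj.mpr (adj_secondPath G v a b (by simp))).le
        _ = (j.succ : ℕ) - i := by
            rw [Fin.le_iff_val_le_val, Fin.val_castSucc] at hi; rw [Fin.val_succ]; omega
  · have := potential_sub_le_dist v a b hG v (secondPath v a b i) (secondPath v a b j)
    simp only [potential_secondPath, dist_self, Nat.cast_zero] at this
    omega

theorem dist_inl_secondPath (hG : G.Connected) (x : V) (j : Fin (b + 1)) :
    (attachTwoPaths G v a b).dist (.inl x) (secondPath v a b j) = G.dist x v + j := by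
  refine le_antisymm ?_ ?_
  · calc _ ≤ (attachTwoPaths G v a b).dist (.inl x) (.inl v)
          + (attachTwoPaths G v a b).dist (secondPath v a b 0) (secondPath v a b j) :=
          (connected G v a b hG).dist_triangle
      _ = G.dist x v + j := by
          rw [dist_inl_inl v a b hG, dist_secondPath_secondPath v a b hG (Fin.zero_le j)]; simp
  · have := potential_sub_le_dist v a b hG x (.inl x) (secondPath v a b j)
    simp only [potential_secondPath, potential_inl, dist_self, Nat.cast_zero] at this
    omega

theorem dist_inl_firstPath (hG : G.Connected) (x : V) (i : Fin (a + 1)) :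
    (attachTwoPaths G v a b).dist (.inl x) (firstPath v a b i) = G.dist x v + i := by
  have := (swap G v b a).dist_eq (.inl x) (secondPath v b a i)
  rwa [swap_inl, swap_secondPath, dist_inl_secondPath v b a hG] at this

theorem dist_firstPath_secondPath (hG : G.Connected) (i : Fin (a + 1)) (j : Fin (b + 1)) :
    (attachTwoPaths G v a b).dist (firstPath v a b i) (secondPath v a b j) = (i : ℕ) + j := by
  refine le_antisymm ?_ ?_
  · calc _ ≤ (attachTwoPaths G v a b).dist (firstPath v a b i) (.inl v)
          + (attachTwoPaths G v a b).dist (.inl v) (secondPath v a b j) :=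
          (connected G v a b hG).dist_triangle
      _ = (i : ℕ) + j := by
          rw [dist_comm, dist_inl_firstPath v a b hG, dist_inl_secondPath v a b hG]; simp
  · have := potential_sub_le_dist v a b hG v (firstPath v a b i) (secondPath v a b j)
    simp only [potential_secondPath, potential_firstPath, dist_self, Nat.cast_zero] at this
    omega

variable [Finite V]

theorem ecc_inl (hG : G.Connected) (x : V) :
    ecc (attachTwoPaths G v a b) (.inl x) = max (ecc G x) (G.dist x v + max a b) := by
  refine le_antisymm (ecc_le ?_) ?_
  · rintro (y | i | j)
    · rw [dist_inl_inl v a b hG]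
      exact le_max_of_le_left (dist_le_ecc x y)
    · rw [← firstPath_succ, dist_inl_firstPath v a b hG, Fin.val_succ]
      omega
    · rw [← secondPath_succ, dist_inl_secondPath v a b hG, Fin.val_succ]
      omega
  · obtain ⟨y, hy⟩ := exists_dist_eq_ecc (G := G) x
    have hy' := dist_le_ecc (G := attachTwoPaths G v a b) (.inl x) (.inl y)
    have ha := dist_le_ecc (G := attachTwoPaths G v a b) (.inl x) (firstPath v a b (Fin.last a))
    have hb := dist_le_ecc (G := attachTwoPaths G v a b) (.inl x) (secondPath v a b (Fin.last b))
    rw [dist_inl_inl v a b hG] at hy'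
    rw [dist_inl_firstPath v a b hG, Fin.val_last] at ha
    rw [dist_inl_secondPath v a b hG, Fin.val_last] at hb
    omega

theorem ecc_secondPath (hG : G.Connected) (j : Fin (b + 1)) :
    ecc (attachTwoPaths G v a b) (secondPath v a b j) = max (j + max (ecc G v) a) (b - j) := by
  have hj := j.is_le
  refine le_antisymm (ecc_le ?_) ?_
  · rintro (y | i | i)
    · rw [dist_comm, dist_inl_secondPath v a b hG, dist_comm]
      have := dist_le_ecc (G := G) v y
      omega
    · rw [← firstPath_succ, dist_comm, dist_firstPath_secondPath v a b hG, Fin.val_succ]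
      omega
    · rw [← secondPath_succ]
      rcases le_total j i.succ with h | h
      · rw [dist_secondPath_secondPath v a b hG h, Fin.val_succ]
        omega
      · rw [dist_comm, dist_secondPath_secondPath v a b hG h]
        omega
  · obtain ⟨y, hy⟩ := exists_dist_eq_ecc (G := G) v
    have hy' := dist_le_ecc (G := attachTwoPaths G v a b) (secondPath v a b j) (.inl y)
    have ha := dist_le_ecc (G := attachTwoPaths G v a b) (secondPath v a b j)
      (firstPath v a b (Fin.last a))
    have hb := dist_le_ecc (G := attachTwoPaths G v a b) (secondPath v a b j)
      (secondPath v a b (Fin.last b))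
    rw [dist_comm, dist_inl_secondPath v a b hG, dist_comm, hy] at hy'
    rw [dist_comm, dist_firstPath_secondPath v a b hG, Fin.val_last] at ha
    rw [dist_secondPath_secondPath v a b hG (Fin.le_last j), Fin.val_last] at hb
    omega

theorem ecc_firstPath (hG : G.Connected) (i : Fin (a + 1)) :
    ecc (attachTwoPaths G v a b) (firstPath v a b i) = max (i + max (ecc G v) b) (a - i) := by
  rw [← swap_secondPath, Iso.ecc_eq, ecc_secondPath v b a hG]

end attachTwoPaths

open Finset

/-- Total eccentricity of the `b` new vertices of one path when the other path has `a` new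
vertices and `E = e_G(v)` (see `ecc_secondPath`). -/
def branchEccSum (E a b : ℕ) : ℕ :=
  ∑ j ∈ range b, max (j + 1 + max E a) (b - (j + 1))

theorem totalEcc_attachTwoPaths {V : Type*} [Fintype V] {G : SimpleGraph V} (hG : G.Connected)
    (v : V) (a b : ℕ) :
    totalEcc (attachTwoPaths G v a b) = ∑ x, max (ecc G x) (G.dist x v + max a b)
      + branchEccSum (ecc G v) b a + branchEccSum (ecc G v) a b := by
  rw [totalEcc, Fintype.sum_sum_type, Fintype.sum_sum_type, add_assoc, branchEccSum,
    branchEccSum, ← Fin.sum_univ_eq_sum_range, ← Fin.sum_univ_eq_sum_range]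
  congr 1
  · exact sum_congr rfl fun x _ => attachTwoPaths.ecc_inl v a b hG x
  congr 1
  · refine sum_congr rfl fun i _ => ?_
    rw [← attachTwoPaths.firstPath_succ, attachTwoPaths.ecc_firstPath v a b hG, Fin.val_succ]
  · refine sum_congr rfl fun j _ => ?_
    rw [← attachTwoPaths.secondPath_succ, attachTwoPaths.ecc_secondPath v a b hG, Fin.val_succ]

section BranchEccSum

variable {E k l : ℕ}

theorem branchEccSum_shorter_le (hkl : k ≤ l) :
    branchEccSum E l (k + 1) ≤ branchEccSum E (l + 1) k + (k + 1 + max E l) := by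
  rw [branchEccSum, sum_range_succ, branchEccSum]
  exact add_le_add (sum_le_sum fun i _ => by omega) (by omega)

theorem branchEccSum_longer_le (hk : k < E) :
    branchEccSum E (k + 1) l + (l + 1 + E) ≤ branchEccSum E k (l + 1) := by
  rw [branchEccSum, branchEccSum, sum_range_succ]
  exact add_le_add (sum_le_sum fun j _ => by omega) (by omega)

theorem branchEccSum_shorter_eq (hE : E ≤ k) (hkl : k < l) :
    branchEccSum E l (k + 1) = branchEccSum E (l + 1) k + (l + 1) := by
  rw [branchEccSum, sum_range_succ', branchEccSum]
  congr 1
  · exact sum_congr rfl fun i _ => by omega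
  · omega

theorem branchEccSum_longer_eq (hE : E ≤ k) (hkl : k < l) :
    branchEccSum E k (l + 1) = branchEccSum E (k + 1) l + l := by
  rw [branchEccSum, sum_range_succ', branchEccSum]
  congr 1
  · exact sum_congr rfl fun j _ => by omega
  · omega

end BranchEccSum

theorem stmt1 {V : Type*} [Fintype V] (G : SimpleGraph V) (hG : G.Connected)
    (hV : 2 ≤ Fintype.card V) (v : V) (k l : ℕ) (hk : 1 ≤ k) (hkl : k ≤ l) :
    totalEcc (attachTwoPaths G v k l) < totalEcc (attachTwoPaths G v (k - 1) (l + 1)) := by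
  obtain ⟨k, rfl⟩ : ∃ k', k = k' + 1 := ⟨k - 1, by omega⟩
  rw [Nat.add_sub_cancel, totalEcc_attachTwoPaths hG, totalEcc_attachTwoPaths hG,
    max_eq_right hkl, max_eq_right (by omega : k ≤ l + 1)]
  rcases lt_or_ge k (ecc G v) with hE | hE
  · have hS : ∑ x, max (ecc G x) (G.dist x v + l)
        ≤ ∑ x, max (ecc G x) (G.dist x v + (l + 1)) :=
      sum_le_sum fun x _ => by omega
    have := branchEccSum_shorter_le (E := ecc G v) (by omega : k ≤ l)
    have := branchEccSum_longer_le (E := ecc G v) (l := l) hE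
    omega
  · -- Since `e_G(x) ≤ d(x,v) + E ≤ d(x,v) + l`, every vertex of `G` gains exactly `1`.
    have hS : ∑ x, max (ecc G x) (G.dist x v + (l + 1))
        = ∑ x, max (ecc G x) (G.dist x v + l) + Fintype.card V := by
      rw [← card_univ, card_eq_sum_ones, ← sum_add_distrib]
      exact sum_congr rfl fun x _ => by
        have := hG.ecc_le_dist_add_ecc x v
        omega
    rw [hS, branchEccSum_shorter_eq hE hkl, branchEccSum_longer_eq hE hkl]
    omega
end

section
/- Let n ≥ 3 and let G be a connected graph on n vertices with no cut vertex. Then ε(G) ≤ n·⌊n/2⌋, and the cycle C_n attains this bound, i.e., ε(C_n) = n·⌊n/2⌋. -/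
open SimpleGraph

/-!
In a graph without cut vertices, let `d = dist u v`. For `0 < i < d` the layer
`{x | dist u x = i}` has at least two vertices: a lone vertex in it would separate `u` from `v`,
since every `u`–`v` walk passes through every layer. Counting the layers `0, …, d` gives
`2 d ≤ n`, so every eccentricity is at most `⌊n/2⌋`.

In `C_n` the forward arc from `a` to `b` has `(b - a).val` edges, and one of the two arcs has at
most `⌊n/2⌋`. Conversely `x ↦ min (x - a).val (n - (x - a).val)` changes by at most one along an
edge, so the vertex `a + ⌊n/2⌋` is at distance exactly `⌊n/2⌋` from `a`.
-/

open Finset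

lemma Nat.min_sub_mod_succ_le {n s t : ℕ} (ht : t < n) (hs : s = (t + 1) % n) :
    min s (n - s) ≤ min t (n - t) + 1 ∧ min t (n - t) ≤ min s (n - s) + 1 := by
  obtain h | h : t + 1 < n ∨ t + 1 = n := by omega
  · rw [Nat.mod_eq_of_lt h] at hs
    omega
  · rw [h, Nat.mod_self] at hs
    omega

namespace SimpleGraph

variable {V : Type*} {G : SimpleGraph V}

lemma Walk.exists_mem_support_dist_eq {a b : V} (p : G.Walk a b) (u : V) {i : ℕ}
    (ha : G.dist u a ≤ i) (hb : i ≤ G.dist u b) : ∃ x ∈ p.support, G.dist u x = i := by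
  induction p with
  | nil => exact ⟨_, Walk.start_mem_support _, le_antisymm ha hb⟩
  | @cons a c b hadj q ih =>
    rcases ha.eq_or_lt with ha | ha
    · exact ⟨a, Walk.start_mem_support _, ha⟩
    · have hc : G.dist u c ≤ G.dist u a + 1 := by
        simpa [dist_eq_one_iff_adj.2 hadj] using hadj.reachable.dist_triangle_right u
      obtain ⟨x, hx, hxi⟩ := ih (by omega) hb
      exact ⟨x, List.mem_cons_of_mem _ hx, hxi⟩

lemma exists_dist_eq_of_le_dist {u v : V} {i : ℕ} (hi : i ≤ G.dist u v) :
    ∃ x, G.dist u x = i := by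
  rcases (G.dist u v).eq_zero_or_pos with h | h
  · exact ⟨u, by simp; omega⟩
  · obtain ⟨p⟩ := Reachable.of_dist_ne_zero h.ne'
    obtain ⟨x, -, hx⟩ := p.exists_mem_support_dist_eq u (by simp) hi
    exact ⟨x, hx⟩

lemma exists_walk_not_mem_support_of_not_isCutVertex {u v w : V} (hw : ¬ IsCutVertex G w)
    (hu : u ≠ w) (hv : v ≠ w) : ∃ p : G.Walk u v, w ∉ p.support := by
  obtain ⟨p⟩ := (not_not.1 hw).preconnected ⟨u, hu⟩ ⟨v, hv⟩
  refine ⟨p.map (Embedding.induce _).toHom, fun hw' => ?_⟩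
  obtain ⟨x, -, hx⟩ := List.mem_map.1 (Walk.support_map _ p ▸ hw')
  exact x.2 hx

lemma exists_ne_dist_eq_of_not_isCutVertex {u v w : V} (hw : ¬ IsCutVertex G w) {i : ℕ}
    (hi : 0 < i) (hiv : i < G.dist u v) : ∃ x ≠ w, G.dist u x = i := by
  by_cases huv : u = w ∨ v = w
  · obtain ⟨x, hx⟩ := exists_dist_eq_of_le_dist hiv.le
    refine ⟨x, ?_, hx⟩
    rintro rfl
    rcases huv with rfl | rfl
    · simp at hx; omega
    · omega
  · push Not at huv
    obtain ⟨p, hp⟩ := exists_walk_not_mem_support_of_not_isCutVertex hw huv.1 huv.2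
    obtain ⟨x, hx, hxi⟩ := p.exists_mem_support_dist_eq u (by simp) hiv.le
    exact ⟨x, fun h => hp (h ▸ hx), hxi⟩

lemma two_mul_dist_le_card [Fintype V] (hcut : ∀ w, ¬ IsCutVertex G w) (u v : V) :
    2 * G.dist u v ≤ Fintype.card V := by
  classical
  rcases hd : G.dist u v with _ | d
  · simp
  let layer (i : ℕ) : ℕ := #{x | G.dist u x = i}
  have layer_pos (i : ℕ) (hi : i ≤ d + 1) : 0 < layer i := by
    obtain ⟨x, hx⟩ := exists_dist_eq_of_le_dist (hd ▸ hi : i ≤ G.dist u v)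
    exact card_pos.2 ⟨x, by simpa using hx⟩
  have layer_two (i : ℕ) (hi : i < d) : 2 ≤ layer (i + 1) := by
    obtain ⟨x, hx⟩ := card_pos.1 (layer_pos (i + 1) (by omega))
    obtain ⟨y, hyx, hy⟩ := exists_ne_dist_eq_of_not_isCutVertex (hcut x)
      (Nat.succ_pos i) (by omega : i + 1 < G.dist u v)
    exact one_lt_card.2 ⟨y, by simpa using hy, x, hx, hyx⟩
  have middle : 2 * d ≤ ∑ i ∈ range d, layer (i + 1) := by
    simpa [mul_comm] using
      card_nsmul_le_sum (range d) _ 2 fun i hi => layer_two i (mem_range.1 hi)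
  calc 2 * (d + 1) ≤ layer 0 + ∑ i ∈ range d, layer (i + 1) + layer (d + 1) := by
        have := layer_pos 0 (by omega); have := layer_pos (d + 1) le_rfl; omega
    _ = ∑ i ∈ range (d + 2), layer i := by rw [sum_range_succ _ (d + 1), sum_range_succ']; ring
    _ = #{x | G.dist u x ∈ range (d + 2)} := sum_card_fiberwise_eq_card_filter _ _ _
    _ ≤ Fintype.card V := card_le_univ _

lemma Walk.le_add_length_of_adj_le {f : V → ℕ} (hf : ∀ x y, G.Adj x y → f y ≤ f x + 1)
    {a b : V} (p : G.Walk a b) : f b ≤ f a + p.length := by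
  induction p with
  | nil => simp
  | cons hadj q ih =>
    have := hf _ _ hadj
    rw [Walk.length_cons]
    omega

lemma Reachable.le_add_dist_of_adj_le {f : V → ℕ} (hf : ∀ x y, G.Adj x y → f y ≤ f x + 1)
    {a b : V} (h : G.Reachable a b) : f b ≤ f a + G.dist a b := by
  obtain ⟨p, hp⟩ := h.exists_walk_length_eq_dist
  exact hp ▸ p.le_add_length_of_adj_le hf

lemma ecc_le_of_forall_dist_le {v : V} {k : ℕ} (h : ∀ u, G.dist v u ≤ k) : ecc G v ≤ k :=
  have : Nonempty V := ⟨v⟩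
  ciSup_le h

lemma dist_le_ecc [Finite V] (v u : V) : G.dist v u ≤ ecc G v :=
  le_ciSup (Set.finite_range _).bddAbove u

lemma totalEcc_le_of_not_isCutVertex [Fintype V] (hcut : ∀ w, ¬ IsCutVertex G w) :
    totalEcc G ≤ Fintype.card V * (Fintype.card V / 2) := by
  calc totalEcc G ≤ #(univ : Finset V) • (Fintype.card V / 2) :=
        sum_le_card_nsmul _ _ _ fun v _ => ecc_le_of_forall_dist_le fun u =>
          (Nat.le_div_iff_mul_le two_pos).2 (by linarith [two_mul_dist_le_card hcut v u])
    _ = Fintype.card V * (Fintype.card V / 2) := by rw [card_univ, smul_eq_mul]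

section CycleGraph

variable {n : ℕ} [NeZero n]

lemma cycleGraph_dist_le_val_sub (a b : Fin n) : (cycleGraph n).dist a b ≤ (b - a).val := by
  induction hk : (b - a).val generalizing b with
  | zero =>
    rw [Fin.val_eq_zero_iff, sub_eq_zero] at hk
    simp [hk]
  | succ k ih =>
    have hn : 1 < n := by have := (b - a).isLt; omega
    have hadj : (cycleGraph n).Adj (b - 1) b := by
      rw [cycleGraph_adj', sub_sub_cancel, Fin.val_one', Nat.mod_eq_of_lt hn]
      exact Or.inr rfl
    have hk' : (b - 1 - a).val = k := by
      rw [sub_right_comm, Fin.val_sub_one_of_ne_zero (fun h => by simp [h] at hk), hk]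
      rfl
    calc (cycleGraph n).dist a b
        ≤ (cycleGraph n).dist a (b - 1) + (cycleGraph n).dist (b - 1) b :=
          hadj.reachable.dist_triangle_right a
      _ ≤ k + 1 := by rw [dist_eq_one_iff_adj.2 hadj]; exact Nat.add_le_add_right (ih _ hk') 1

lemma cycleGraph_min_val_sub_le (a : Fin n) {x y : Fin n} (hxy : (cycleGraph n).Adj x y) :
    min (y - a).val (n - (y - a).val) ≤ min (x - a).val (n - (x - a).val) + 1 := by
  rcases cycleGraph_adj'.1 hxy with h | h
  · have : (x - a).val = ((y - a).val + 1) % n := by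
      rw [← sub_add_sub_cancel x y a, Fin.val_add, h, add_comm]
    exact (Nat.min_sub_mod_succ_le (y - a).isLt this).2
  · have : (y - a).val = ((x - a).val + 1) % n := by
      rw [← sub_add_sub_cancel y x a, Fin.val_add, h, add_comm]
    exact (Nat.min_sub_mod_succ_le (x - a).isLt this).1

lemma ecc_cycleGraph (v : Fin n) : ecc (cycleGraph n) v = n / 2 := by
  apply le_antisymm
  · refine ecc_le_of_forall_dist_le fun u => ?_
    have h₁ := cycleGraph_dist_le_val_sub v u
    have h₂ := cycleGraph_dist_le_val_sub u v
    rw [dist_comm, ← neg_sub, Fin.val_neg] at h₂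
    split_ifs at h₂ <;> omega
  · set w := v + Fin.ofNat n (n / 2)
    have hw : (w - v).val = n / 2 := by
      rw [add_sub_cancel_left, Fin.val_ofNat,
        Nat.mod_eq_of_lt (Nat.div_lt_self (NeZero.pos n) one_lt_two)]
    have := (cycleGraph_preconnected v w).le_add_dist_of_adj_le fun x y =>
      cycleGraph_min_val_sub_le v
    simp only [hw, sub_self, Fin.val_zero] at this
    exact (by omega : n / 2 ≤ (cycleGraph n).dist v w).trans (dist_le_ecc v w)

end CycleGraph

lemma totalEcc_cycleGraph (n : ℕ) : totalEcc (cycleGraph n) = n * (n / 2) := by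
  calc totalEcc (cycleGraph n) = ∑ _v : Fin n, n / 2 :=
        sum_congr rfl fun v _ => have : NeZero n := NeZero.of_pos v.pos; ecc_cycleGraph v
    _ = n * (n / 2) := by simp

end SimpleGraph

theorem stmt15_general {V : Type*} [Fintype V] (G : SimpleGraph V)
    (n : ℕ) (hcard : Fintype.card V = n)
    (hcut : ∀ w, ¬ IsCutVertex G w) :
    totalEcc G ≤ n * (n / 2) ∧ totalEcc (cycleGraph n) = n * (n / 2) := by
  subst hcard
  exact ⟨totalEcc_le_of_not_isCutVertex hcut, totalEcc_cycleGraph _⟩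

theorem stmt15 {V : Type*} [Fintype V] (G : SimpleGraph V) (hG : G.Connected)
    (n : ℕ) (hn : 3 ≤ n) (hcard : Fintype.card V = n)
    (hcut : ∀ w, ¬ IsCutVertex G w) :
    totalEcc G ≤ n * (n / 2) ∧ totalEcc (cycleGraph n) = n * (n / 2) :=
  stmt15_general G n hcard hcut
end
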